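/- Let a ≥ 3 be an integer and let β be the unique real root greater than 1 of the polynomial P(X) = X^3 − aX^2 − (a−1)X + 1. Then L_⊕(β) = 1. -/

import Mathlib

open Polynomial

/-- The β-transformation `T_β(x) = βx - ⌊βx⌋`. -/
noncomputable def betaT (β : ℝ) : ℝ → ℝ := fun x => β * x - ⌊β * x⌋

/-- `fin(β)`: reals `x` such that `|x|/β^N ∈ [0,1)` and the greedy expansion of
`|x|/β^N` is finite, for some `N, n ∈ ℕ`. -/
def finBeta (β : ℝ) : Set ℝ :=
  {x | ∃ N n : ℕ, |x| / β ^ N ∈ Set.Ico (0 : ℝ) 1 ∧ (betaT β)^[n] (|x| / β ^ N) = 0}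

/-- `ℤ_β`: the set of β-integers. -/
def betaInt (β : ℝ) : Set ℝ :=
  {x | ∃ N : ℕ, |x| / β ^ N ∈ Set.Ico (0 : ℝ) 1 ∧ (betaT β)^[N] (|x| / β ^ N) = 0}

/-- `L_⊕(β)`: the least `L ∈ ℕ` such that `β^L·(x+y) ∈ ℤ_β` for all
`x, y ∈ ℤ_β` with `x + y ∈ fin(β)`. -/
noncomputable def Lplus (β : ℝ) : ℕ :=
  sInf {L : ℕ | ∀ x ∈ betaInt β, ∀ y ∈ betaInt β,
    x + y ∈ finBeta β → β ^ L * (x + y) ∈ betaInt β}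

/-- `L_⊗(β)`: the least `L ∈ ℕ` such that `β^L·(x·y) ∈ ℤ_β` for all
`x, y ∈ ℤ_β` with `x·y ∈ fin(β)`. -/
noncomputable def Lmul (β : ℝ) : ℕ :=
  sInf {L : ℕ | ∀ x ∈ betaInt β, ∀ y ∈ betaInt β,
    x * y ∈ finBeta β → β ^ L * (x * y) ∈ betaInt β}

/-!
Greedy β-digits lie in `{0, …, a}`, and a digit `a` is always followed by a digit `≤ a - 2`
because `β (β - a) < a - 1`. For the conjugate `γ ∈ (1/(2a-3), 1)` of `β` this bounds the
conjugate of every β-integer by `(a - γ)/(1 - γ)` in absolute value. If `x + y ∈ fin(β)` but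
`β (x + y) ∉ ℤ_β`, the expansion of `x + y` has a nonzero digit at some position `-s` with
`s ≥ 2`, so the conjugate of `β^s (x + y)` is at least `1`; but it is `γ^s` times the conjugate
of `x + y`, hence at most `2γ²(a - γ)/(1 - γ) < 1`. Thus `L_⊕(β) ≤ 1`, and `L_⊕(β) ≠ 0`
because `aβ + (a - 1) = β² + β⁻¹` is a sum of two β-integers with finite but non-integral
expansion.
-/

theorem Polynomial.aeval_eq_zero_of_irreducible {K L : Type*} [Field K] [CommRing L] [Nontrivial L]
    [Algebra K L] {f : K[X]} (hf : Irreducible f) {x y : L} (hx : aeval x f = 0)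
    (hy : aeval y f = 0) {p : K[X]} (hp : aeval x p = 0) : aeval y p = 0 := by
  obtain ⟨q, rfl⟩ := minpoly.dvd K x hp
  rw [← minpoly.eq_of_irreducible hf hx]
  simp [hy]

lemma betaT_zero (β : ℝ) : betaT β 0 = 0 := by simp [betaT]

lemma betaT_mem_Ico (β x : ℝ) : betaT β x ∈ Set.Ico (0 : ℝ) 1 :=
  ⟨sub_nonneg.2 (Int.floor_le _), sub_lt_iff_lt_add'.2 (Int.lt_floor_add_one _)⟩

lemma betaT_eq_of_mem_Ico {β x : ℝ} (n : ℤ) (h : β * x - n ∈ Set.Ico (0 : ℝ) 1) :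
    betaT β x = β * x - n := by
  have : ⌊β * x⌋ = n := Int.floor_eq_iff.2 ⟨by linarith [h.1], by linarith [h.2]⟩
  simp only [betaT, this]

lemma betaT_iterate_div_pow {β u : ℝ} (hβ : 1 ≤ β) (hu : u ∈ Set.Ico (0 : ℝ) 1) (j : ℕ) :
    (betaT β)^[j] (u / β ^ j) = u := by
  induction j with
  | zero => simp
  | succ j ih =>
    have hβj : 1 ≤ β ^ j := one_le_pow₀ hβ
    have hmem : u / β ^ j ∈ Set.Ico (0 : ℝ) 1 :=
      ⟨by have := hu.1; positivity, (div_le_self hu.1 hβj).trans_lt hu.2⟩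
    have hstep : β * (u / β ^ (j + 1)) = u / β ^ j := by
      rw [pow_succ, ← div_div, mul_div_cancel₀ _ (by positivity)]
    rw [Function.iterate_succ_apply, betaT_eq_of_mem_Ico 0 (by simpa [hstep] using hmem), hstep,
      Int.cast_zero, sub_zero, ih]

noncomputable def betaDigit (β u : ℝ) (k : ℕ) : ℤ := ⌊β * (betaT β)^[k] u⌋

lemma betaT_iterate_succ (β u : ℝ) (k : ℕ) :
    (betaT β)^[k + 1] u = β * (betaT β)^[k] u - betaDigit β u k := by
  rw [Function.iterate_succ_apply']; rfl

lemma betaT_iterate_mem_Ico (β : ℝ) {u : ℝ} (hu : u ∈ Set.Ico (0 : ℝ) 1) :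
    ∀ k, (betaT β)^[k] u ∈ Set.Ico (0 : ℝ) 1
  | 0 => hu
  | _ + 1 => by rw [Function.iterate_succ_apply']; exact betaT_mem_Ico β _

section Digits

variable {β u : ℝ}

lemma betaDigit_nonneg (hu : u ∈ Set.Ico (0 : ℝ) 1) (hβ : 0 ≤ β) (k : ℕ) :
    0 ≤ betaDigit β u k :=
  Int.floor_nonneg.2 (mul_nonneg hβ (betaT_iterate_mem_Ico β hu k).1)

lemma betaDigit_le {a : ℤ} (hu : u ∈ Set.Ico (0 : ℝ) 1) (hβ : 0 < β) (hβa : β ≤ a + 1) (k : ℕ) :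
    betaDigit β u k ≤ a := by
  refine Int.lt_add_one_iff.1 (Int.floor_lt.2 ?_)
  push_cast
  exact (mul_lt_of_lt_one_right hβ (betaT_iterate_mem_Ico β hu k).2).trans_le hβa

lemma betaDigit_succ_le_of_eq {a : ℤ} (hu : u ∈ Set.Ico (0 : ℝ) 1) (hβ : 0 < β)
    (hββa : β * (β - a) ≤ a - 1) {k : ℕ} (hk : betaDigit β u k = a) :
    betaDigit β u (k + 1) ≤ a - 2 := by
  have hr := betaT_iterate_mem_Ico β hu k
  have hle : (a : ℝ) ≤ β * (betaT β)^[k] u := by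
    have := Int.floor_le (β * (betaT β)^[k] u)
    rwa [show ⌊β * (betaT β)^[k] u⌋ = a from hk] at this
  have hnext : (betaT β)^[k + 1] u < β - a := by
    rw [betaT_iterate_succ, hk]; nlinarith [hr.2]
  refine Int.lt_add_one_iff.1 (Int.floor_lt.2 ?_)
  calc β * (betaT β)^[k + 1] u < β * (β - a) := mul_lt_mul_of_pos_left hnext hβ
    _ ≤ a - 1 := hββa
    _ = ((a - 2 + 1 : ℤ) : ℝ) := by push_cast; ring

end Digits

/-- `∑_{k<M} d_k X^(M-1-k)` in Horner form: the digit string `d_0 ⋯ d_(M-1)`, most significant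
digit first. -/
noncomputable def digitPoly (d : ℕ → ℤ) : ℕ → ℚ[X]
  | 0 => 0
  | M + 1 => X * digitPoly d M + C (d M : ℚ)

section DigitPoly

variable {A : Type*} [CommRing A] [Algebra ℚ A] (d : ℕ → ℤ)

@[simp] lemma aeval_digitPoly_zero (x : A) : aeval x (digitPoly d 0) = 0 := by
  simp [digitPoly]

@[simp] lemma aeval_digitPoly_succ (x : A) (M : ℕ) :
    aeval x (digitPoly d (M + 1)) = x * aeval x (digitPoly d M) + d M := by
  simp [digitPoly]

end DigitPoly

lemma pow_mul_eq_aeval_digitPoly_add (β u : ℝ) (M : ℕ) :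
    β ^ M * u = aeval β (digitPoly (betaDigit β u) M) + (betaT β)^[M] u := by
  induction M with
  | zero => simp
  | succ M ih =>
    rw [aeval_digitPoly_succ, betaT_iterate_succ, pow_succ', mul_assoc, ih]
    ring

section ConjugateBounds

variable {γ : ℝ} {d : ℕ → ℤ}

lemma aeval_digitPoly_nonneg (hγ : 0 ≤ γ) (hd : ∀ k, 0 ≤ d k) :
    ∀ M, 0 ≤ aeval γ (digitPoly d M)
  | 0 => by simp
  | M + 1 => by
    rw [aeval_digitPoly_succ]
    have := aeval_digitPoly_nonneg hγ hd M
    have : (0 : ℝ) ≤ d M := by exact_mod_cast hd M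
    positivity

lemma le_aeval_digitPoly_succ (hγ : 0 ≤ γ) (hd : ∀ k, 0 ≤ d k) (M : ℕ) :
    (d M : ℝ) ≤ aeval γ (digitPoly d (M + 1)) := by
  rw [aeval_digitPoly_succ]
  have := aeval_digitPoly_nonneg hγ hd M
  nlinarith

variable {a : ℤ}

/-- The extra `1` is only needed when the last digit is `a`, and then the digit before it is
at most `a - 2`, which pays for it. -/
lemma aeval_digitPoly_succ_le (ha : 1 ≤ a) (hγ0 : 0 ≤ γ) (hγ1 : γ < 1) (hda : ∀ k, d k ≤ a)
    (hchain : ∀ k, d k = a → d (k + 1) ≤ a - 2) (M : ℕ) :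
    aeval γ (digitPoly d (M + 1)) ≤ (a - 1) / (1 - γ) + if d M = a then 1 else 0 := by
  set B := ((a : ℝ) - 1) / (1 - γ)
  have hB : B = a - 1 + γ * B := by
    have : 1 - γ ≠ 0 := by linarith
    simp only [B]; field_simp; ring
  have ha' : (1 : ℝ) ≤ a := by exact_mod_cast ha
  have hB0 : 0 ≤ B := div_nonneg (by linarith) (by linarith)
  have hdigit : ∀ k, (d k : ℝ) ≤ a - 1 + if d k = a then 1 else 0 := by
    intro k
    split_ifs with h
    · simp [h]
    · have : d k ≤ a - 1 := by have := hda k; omega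
      rw [add_zero]
      exact_mod_cast this
  have hind : ∀ k, (0 : ℝ) ≤ if d k = a then 1 else 0 := fun k => by split_ifs <;> norm_num
  induction M with
  | zero =>
    rw [aeval_digitPoly_succ, aeval_digitPoly_zero, mul_zero, zero_add]
    nlinarith [hdigit 0]
  | succ M ih =>
    rw [aeval_digitPoly_succ]
    by_cases hM : d M = a
    · have hnext : (d (M + 1) : ℝ) ≤ a - 2 := by exact_mod_cast hchain M hM
      rw [if_pos hM] at ih
      have := mul_le_mul_of_nonneg_left ih hγ0
      nlinarith [hind (M + 1)]
    · rw [if_neg hM, add_zero] at ih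
      have := mul_le_mul_of_nonneg_left ih hγ0
      linarith [hdigit (M + 1)]

lemma abs_aeval_digitPoly_le (ha : 1 ≤ a) (hγ0 : 0 ≤ γ) (hγ1 : γ < 1) (hd0 : ∀ k, 0 ≤ d k)
    (hda : ∀ k, d k ≤ a) (hchain : ∀ k, d k = a → d (k + 1) ≤ a - 2) (M : ℕ) :
    |aeval γ (digitPoly d M)| ≤ (a - γ) / (1 - γ) := by
  have h1γ : 0 < 1 - γ := by linarith
  rw [abs_of_nonneg (aeval_digitPoly_nonneg hγ0 hd0 M)]
  cases M with
  | zero =>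
    have : (1 : ℝ) ≤ a := by exact_mod_cast ha
    simpa using div_nonneg (by linarith) h1γ.le
  | succ M =>
    have hsplit : ((a : ℝ) - γ) / (1 - γ) = (a - 1) / (1 - γ) + 1 := by
      field_simp; ring
    rw [hsplit]
    refine (aeval_digitPoly_succ_le ha hγ0 hγ1 hda hchain M).trans ?_
    split_ifs <;> norm_num

end ConjugateBounds

section BetaIntegers

variable {β : ℝ}

lemma abs_mul_div_pow_succ (hβ : 0 < β) (x : ℝ) (N : ℕ) :
    |β * x| / β ^ (N + 1) = |x| / β ^ N := by
  rw [abs_mul, abs_of_pos hβ, pow_succ']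
  field_simp

lemma beta_mul_mem_betaInt (hβ : 0 < β) {x : ℝ} (hx : x ∈ betaInt β) : β * x ∈ betaInt β := by
  obtain ⟨N, hu, hN⟩ := hx
  refine ⟨N + 1, ?_, ?_⟩ <;> rw [abs_mul_div_pow_succ hβ]
  · exact hu
  · rw [Function.iterate_succ_apply', hN, betaT_zero]

lemma intCast_mem_betaInt (hβ : 0 < β) {k : ℤ} (hk0 : 0 ≤ k) (hkβ : k < β) :
    (k : ℝ) ∈ betaInt β := by
  have hk : (0 : ℝ) ≤ k := by exact_mod_cast hk0
  refine ⟨1, ?_, ?_⟩ <;> rw [abs_of_nonneg hk, pow_one]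
  · exact ⟨div_nonneg hk hβ.le, (div_lt_one hβ).2 hkβ⟩
  · rw [Function.iterate_one, betaT_eq_of_mem_Ico k (by rw [mul_div_cancel₀ _ hβ.ne']; simp)]
    rw [mul_div_cancel₀ _ hβ.ne', sub_self]

lemma exists_abs_eq_aeval_digitPoly_of_mem_betaInt (hβ : 0 < β) {x : ℝ} (hx : x ∈ betaInt β) :
    ∃ u ∈ Set.Ico (0 : ℝ) 1, ∃ N, |x| = aeval β (digitPoly (betaDigit β u) N) := by
  obtain ⟨N, hu, hN⟩ := hx
  refine ⟨_, hu, N, ?_⟩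
  have := pow_mul_eq_aeval_digitPoly_add β (|x| / β ^ N) N
  rwa [hN, add_zero, mul_div_cancel₀ _ (by positivity)] at this

lemma exists_aeval_eq_and_abs_aeval_le_of_mem_betaInt {a : ℤ} {γ : ℝ} (hβ : 0 < β)
    (hβa : β ≤ a + 1) (hββa : β * (β - a) ≤ a - 1) (hγ0 : 0 ≤ γ) (hγ1 : γ < 1) {x : ℝ}
    (hx : x ∈ betaInt β) :
    ∃ p : ℚ[X], aeval β p = x ∧ |aeval γ p| ≤ (a - γ) / (1 - γ) := by
  have ha : 1 ≤ a := by
    by_contra h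
    have : (a : ℝ) ≤ 0 := by exact_mod_cast (show a ≤ 0 by omega)
    nlinarith
  obtain ⟨u, hu, N, hxN⟩ := exists_abs_eq_aeval_digitPoly_of_mem_betaInt hβ hx
  have hbound := abs_aeval_digitPoly_le ha hγ0 hγ1 (betaDigit_nonneg hu hβ.le)
    (betaDigit_le hu hβ hβa) (fun _ => betaDigit_succ_le_of_eq hu hβ hββa) N
  rcases abs_choice x with h | h
  · exact ⟨digitPoly (betaDigit β u) N, by rw [← hxN, h], hbound⟩
  · exact ⟨-digitPoly (betaDigit β u) N, by rw [map_neg, ← hxN, h, neg_neg],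
      by rwa [map_neg, abs_neg]⟩

lemma betaT_iterate_eq_zero_of_le {u : ℝ} {m n : ℕ} (hmn : m ≤ n) (hm : (betaT β)^[m] u = 0) :
    (betaT β)^[n] u = 0 := by
  rw [← Nat.sub_add_cancel hmn, Function.iterate_add_apply, hm,
    Function.iterate_fixed (betaT_zero β)]

/-- `m - 1` is the position of the last nonzero digit, which alone makes the value at `γ` at
least `1`. -/
lemma exists_lt_pow_mul_eq_aeval_digitPoly (hβ : 0 < β) {γ : ℝ} (hγ : 0 ≤ γ) {u : ℝ}
    (hu : u ∈ Set.Ico (0 : ℝ) 1) {n K : ℕ} (hn : (betaT β)^[n] u = 0)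
    (hK : (betaT β)^[K] u ≠ 0) :
    ∃ m, K < m ∧ β ^ m * u = aeval β (digitPoly (betaDigit β u) m) ∧
      1 ≤ aeval γ (digitPoly (betaDigit β u) m) := by
  classical
  have hex : ∃ m, (betaT β)^[m] u = 0 := ⟨n, hn⟩
  have hm : (betaT β)^[Nat.find hex] u = 0 := Nat.find_spec hex
  have hKm : K < Nat.find hex := by
    by_contra h
    exact hK (betaT_iterate_eq_zero_of_le (not_lt.1 h) hm)
  obtain ⟨j, hj⟩ : ∃ j, Nat.find hex = j + 1 := Nat.exists_eq_succ_of_ne_zero (by omega)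
  have hj0 : (betaT β)^[j] u ≠ 0 := Nat.find_min hex (by omega)
  have hdigit : (betaDigit β u j : ℝ) = β * (betaT β)^[j] u := by
    have := betaT_iterate_succ β u j
    rw [← hj, hm] at this
    linarith
  have hdigit_pos : 0 < betaDigit β u j := by
    have := (betaT_iterate_mem_Ico β hu j).1
    have : (0 : ℝ) < betaDigit β u j := by
      rw [hdigit]; exact mul_pos hβ (lt_of_le_of_ne this (Ne.symm hj0))
    exact_mod_cast this
  refine ⟨j + 1, hj ▸ hKm, ?_, ?_⟩
  · rw [pow_mul_eq_aeval_digitPoly_add, ← hj, hm, add_zero]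
  · exact le_trans (by exact_mod_cast hdigit_pos)
      (le_aeval_digitPoly_succ hγ (betaDigit_nonneg hu hβ.le) j)

lemma exists_aeval_eq_pow_mul_of_beta_mul_not_mem_betaInt (hβ : 0 < β) {γ : ℝ} (hγ : 0 ≤ γ)
    {z : ℝ} (hz : z ∈ finBeta β) (hβz : β * z ∉ betaInt β) :
    ∃ s, 2 ≤ s ∧ ∃ p : ℚ[X], aeval β p = β ^ s * z ∧ 1 ≤ |aeval γ p| := by
  obtain ⟨N, n, hu, hn⟩ := hz
  have hscale := abs_mul_div_pow_succ hβ z N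
  have hN : (betaT β)^[N + 1] (|z| / β ^ N) ≠ 0 := fun h =>
    hβz ⟨N + 1, hscale ▸ hu, hscale ▸ h⟩
  obtain ⟨m, hNm, hval, hconj⟩ := exists_lt_pow_mul_eq_aeval_digitPoly hβ hγ hu hn hN
  have habs : β ^ (m - N) * |z| = aeval β (digitPoly (betaDigit β (|z| / β ^ N)) m) := by
    have hpow : β ^ m = β ^ (m - N) * β ^ N := by rw [← pow_add, Nat.sub_add_cancel (by omega)]
    rw [← hval, hpow, mul_assoc, mul_div_cancel₀ _ (by positivity)]
  refine ⟨m - N, by omega, ?_⟩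
  have hconj' : 1 ≤ |aeval γ (digitPoly (betaDigit β (|z| / β ^ N)) m)| :=
    hconj.trans (le_abs_self _)
  rcases abs_choice z with h | h
  · exact ⟨_, by rw [← habs, h], hconj'⟩
  · exact ⟨-digitPoly (betaDigit β (|z| / β ^ N)) m, by rw [map_neg, ← habs, h]; ring,
      by rwa [map_neg, abs_neg]⟩

end BetaIntegers

theorem beta_mul_add_mem_betaInt {a : ℤ} {β γ : ℝ} (hβ : 0 < β) (hβa : β ≤ a + 1)
    (hββa : β * (β - a) ≤ a - 1) (hγ0 : 0 ≤ γ) (hγ1 : γ < 1)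
    (hγa : 2 * γ ^ 2 * (a - γ) < 1 - γ)
    (hconj : ∀ p : ℚ[X], aeval β p = 0 → aeval γ p = 0) {x y : ℝ}
    (hx : x ∈ betaInt β) (hy : y ∈ betaInt β) (hxy : x + y ∈ finBeta β) :
    β * (x + y) ∈ betaInt β := by
  by_contra h
  obtain ⟨s, hs, p, hp, hp1⟩ :=
    exists_aeval_eq_pow_mul_of_beta_mul_not_mem_betaInt hβ hγ0 hxy h
  obtain ⟨px, hpx, hpxγ⟩ :=
    exists_aeval_eq_and_abs_aeval_le_of_mem_betaInt hβ hβa hββa hγ0 hγ1 hx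
  obtain ⟨py, hpy, hpyγ⟩ :=
    exists_aeval_eq_and_abs_aeval_le_of_mem_betaInt hβ hβa hββa hγ0 hγ1 hy
  have hrel : aeval γ p = γ ^ s * (aeval γ px + aeval γ py) := by
    have := hconj (p - X ^ s * (px + py)) (by simp [hp, hpx, hpy])
    simpa [sub_eq_zero] using this
  have h1γ : 0 < 1 - γ := by linarith
  have hγs : γ ^ s ≤ γ ^ 2 := pow_le_pow_of_le_one hγ0 hγ1.le hs
  have hsum : |aeval γ px + aeval γ py| ≤ 2 * ((a - γ) / (1 - γ)) :=
    (abs_add_le _ _).trans (by linarith)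
  have hlt : γ ^ 2 * (2 * ((a - γ) / (1 - γ))) < 1 := by
    rw [show γ ^ 2 * (2 * ((a - γ) / (1 - γ))) = 2 * γ ^ 2 * (a - γ) / (1 - γ) by ring,
      div_lt_one h1γ]
    exact hγa
  have : |aeval γ p| < 1 := by
    rw [hrel, abs_mul, abs_of_nonneg (by positivity)]
    calc γ ^ s * |aeval γ px + aeval γ py| ≤ γ ^ 2 * (2 * ((a - γ) / (1 - γ))) :=
          mul_le_mul hγs hsum (abs_nonneg _) (by positivity)
      _ < 1 := hlt
  linarith

noncomputable def cubic (a : ℤ) : ℚ[X] := X ^ 3 - C (a : ℚ) * X ^ 2 - C ((a : ℚ) - 1) * X + 1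

lemma aeval_cubic (a : ℤ) (x : ℝ) :
    aeval x (cubic a) = x ^ 3 - a * x ^ 2 - (a - 1) * x + 1 := by
  simp [cubic]

lemma cubic_natDegree (a : ℤ) : (cubic a).natDegree = 3 := by
  unfold cubic; compute_degree!

/-- A rational root would be integral over `ℤ`, hence an integer dividing `1`, but
`P(1) = 3 - 2a` and `P(-1) = -1`. -/
lemma cubic_irreducible (a : ℤ) : Irreducible (cubic a) := by
  refine irreducible_of_degree_le_three_of_not_isRoot (by simp [cubic_natDegree]) fun q hq => ?_
  have hq' : q ^ 3 - a * q ^ 2 - (a - 1) * q + 1 = 0 := by simpa [cubic] using hq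
  have hint : IsIntegral ℤ q := ⟨(X ^ 3 - C a * X ^ 2 - C (a - 1) * X + 1 : ℤ[X]),
    by monicity!, by rw [← aeval_def]; simpa using hq'⟩
  obtain ⟨m, rfl⟩ := IsIntegrallyClosed.isIntegral_iff.mp hint
  simp only [algebraMap_int_eq, eq_intCast] at hq'
  have hm : m ^ 3 - a * m ^ 2 - (a - 1) * m + 1 = 0 := by exact_mod_cast hq'
  have hdvd : m ∣ 1 := ⟨a * m + (a - 1) - m ^ 2, by linear_combination hm⟩
  rcases Int.isUnit_iff.mp (isUnit_of_dvd_one hdvd) with rfl | rfl <;> omega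

section CubicRoots

variable {a : ℤ} {β : ℝ}

lemma lt_of_cubic_root (ha : 2 ≤ a) (hβ : 1 < β)
    (hroot : β ^ 3 - a * β ^ 2 - (a - 1) * β + 1 = 0) : a < β := by
  have ha' : (2 : ℝ) ≤ a := by exact_mod_cast ha
  by_contra h
  nlinarith [mul_nonneg (sq_nonneg β) (sub_nonneg.2 (not_lt.1 h))]

lemma lt_add_one_of_cubic_root (hβ : 0 < β)
    (hroot : β ^ 3 - a * β ^ 2 - (a - 1) * β + 1 = 0) : β < a + 1 := by
  by_contra h
  nlinarith [mul_le_mul_of_nonneg_left (show (1 : ℝ) ≤ β - a by linarith) (sq_nonneg β)]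

lemma mul_sub_lt_of_cubic_root (hβ : 0 < β)
    (hroot : β ^ 3 - a * β ^ 2 - (a - 1) * β + 1 = 0) : β * (β - a) < a - 1 := by
  by_contra h
  nlinarith [mul_le_mul_of_nonneg_left (not_lt.1 h) hβ.le]

/-- The root of `P` in `(0, 1)` lies above `1 / (2a - 3)`, since
`(2a-3)^3 P(1/(2a-3)) = 2(2a-3)(a-1)(a-3) + 1 > 0 > P(1)`. -/
lemma exists_cubic_root_mem_Ioo (ha : 3 ≤ a) :
    ∃ γ ∈ Set.Ioo (1 / (2 * a - 3) : ℝ) 1, γ ^ 3 - a * γ ^ 2 - (a - 1) * γ + 1 = 0 := by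
  have ha' : (3 : ℝ) ≤ a := by exact_mod_cast ha
  set f : ℝ → ℝ := fun x => x ^ 3 - a * x ^ 2 - (a - 1) * x + 1
  have hc : (0 : ℝ) < 2 * a - 3 := by linarith
  have ht1 : 1 / (2 * a - 3 : ℝ) ≤ 1 := by rw [div_le_one hc]; linarith
  have hft : 0 < f (1 / (2 * a - 3)) := by
    have : f (1 / (2 * a - 3)) = (2 * (2 * a - 3) * (a - 1) * (a - 3) + 1) / (2 * a - 3) ^ 3 := by
      simp only [f]; field_simp; ring
    rw [this]
    have : (0 : ℝ) ≤ (2 * a - 3) * (a - 1) * (a - 3) :=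
      mul_nonneg (mul_nonneg hc.le (by linarith)) (by linarith)
    exact div_pos (by linarith) (by positivity)
  have hf1 : f 1 < 0 := by simp only [f]; linarith
  obtain ⟨γ, hγ, hfγ⟩ := intermediate_value_Ioo' ht1 (by fun_prop) ⟨hf1, hft⟩
  exact ⟨γ, hγ, hfγ⟩

lemma two_mul_sq_mul_lt_of_cubic_root {γ : ℝ} (hγ : 1 / (2 * a - 3) < γ) (ha : 3 ≤ a)
    (hroot : γ ^ 3 - a * γ ^ 2 - (a - 1) * γ + 1 = 0) : 2 * γ ^ 2 * (a - γ) < 1 - γ := by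
  have ha' : (3 : ℝ) ≤ a := by exact_mod_cast ha
  have : 1 < (2 * a - 3) * γ := by rwa [div_lt_iff₀' (by linarith)] at hγ
  nlinarith

end CubicRoots

lemma not_mem_betaInt_of_iterate_ne_zero {β z : ℝ} (hβ : 1 < β) (hz : 0 ≤ z) {K : ℕ}
    (hzK : β ^ K < z) (hu : z / β ^ (K + 1) ∈ Set.Ico (0 : ℝ) 1)
    (hT : (betaT β)^[K + 1] (z / β ^ (K + 1)) ≠ 0) : z ∉ betaInt β := by
  rintro ⟨M, hM, hMz⟩
  rw [abs_of_nonneg hz] at hM hMz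
  by_cases hMK : M ≤ K
  · have : β ^ M ≤ β ^ K := pow_le_pow_right₀ hβ.le hMK
    have := (div_lt_one (by positivity)).1 hM.2
    linarith
  · obtain ⟨j, rfl⟩ := Nat.exists_eq_add_of_le (not_le.1 hMK)
    rw [pow_add, ← div_div, Function.iterate_add_apply, betaT_iterate_div_pow hβ.le hu] at hMz
    exact hT hMz

lemma exists_add_mem_finBeta_not_mem_betaInt {a : ℤ} {β : ℝ} (ha : 2 ≤ a) (hβ : 1 < β)
    (hroot : β ^ 3 - a * β ^ 2 - (a - 1) * β + 1 = 0) :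
    ∃ x ∈ betaInt β, ∃ y ∈ betaInt β, x + y ∈ finBeta β ∧ x + y ∉ betaInt β := by
  have hβ0 : 0 < β := by linarith
  have haβ := lt_of_cubic_root ha hβ hroot
  have ha' : (2 : ℝ) ≤ a := by exact_mod_cast ha
  set z : ℝ := β * a + (a - 1) with hz
  have hzβ : β * z = β ^ 3 + 1 := by rw [hz]; linear_combination -hroot
  have hz0 : 0 ≤ z := add_nonneg (mul_nonneg hβ0.le (by linarith)) (by linarith)
  have hβz : β ^ 2 < z := by nlinarith
  have hzβ3 : z < β ^ 3 := by nlinarith [pow_le_pow_left₀ (by norm_num) ha' 3]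
  have hu : z / β ^ 3 ∈ Set.Ico (0 : ℝ) 1 := ⟨by positivity, (div_lt_one (by positivity)).2 hzβ3⟩
  have hinv : 1 / β ∈ Set.Ico (0 : ℝ) 1 := ⟨by positivity, (div_lt_one hβ0).2 hβ⟩
  have hT3 : (betaT β)^[3] (z / β ^ 3) = 1 / β := by
    have hval : β * (z / β ^ 3) - (1 : ℤ) = 1 / β / β ^ 2 := by
      field_simp; linear_combination hzβ
    have hmem : 1 / β / β ^ 2 ∈ Set.Ico (0 : ℝ) 1 :=
      ⟨by positivity, (div_le_self hinv.1 (one_le_pow₀ hβ.le)).trans_lt hinv.2⟩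
    rw [Function.iterate_succ_apply, betaT_eq_of_mem_Ico 1 (hval ▸ hmem), hval,
      betaT_iterate_div_pow hβ.le hinv]
  have hT4 : (betaT β)^[4] (z / β ^ 3) = 0 := by
    rw [Function.iterate_succ_apply', hT3, betaT_eq_of_mem_Ico 1 (by simp [hβ0.ne'])]
    simp [hβ0.ne']
  refine ⟨β * a, ?_, (a - 1 : ℤ), intCast_mem_betaInt hβ0 (by omega) (by push_cast; linarith),
    ?_⟩
  · exact beta_mul_mem_betaInt hβ0 (intCast_mem_betaInt hβ0 (by omega) haβ)
  push_cast
  rw [← hz]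
  refine ⟨⟨3, 4, ?_⟩, not_mem_betaInt_of_iterate_ne_zero hβ hz0 hβz hu ?_⟩
  · rw [abs_of_nonneg hz0]; exact ⟨hu, hT4⟩
  · rw [hT3]; positivity

lemma Lplus_eq_one {β : ℝ}
    (hadd : ∀ x ∈ betaInt β, ∀ y ∈ betaInt β, x + y ∈ finBeta β → β * (x + y) ∈ betaInt β)
    (hnot : ∃ x ∈ betaInt β, ∃ y ∈ betaInt β, x + y ∈ finBeta β ∧ x + y ∉ betaInt β) :
    Lplus β = 1 := by
  set S := {L : ℕ | ∀ x ∈ betaInt β, ∀ y ∈ betaInt β,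
      x + y ∈ finBeta β → β ^ L * (x + y) ∈ betaInt β}
  have hone : 1 ∈ S := by simpa [S] using hadd
  obtain ⟨x, hx, y, hy, hxy, hxy'⟩ := hnot
  change sInf S = 1
  refine le_antisymm (Nat.sInf_le hone) (Nat.one_le_iff_ne_zero.2 fun h => hxy' ?_)
  have hzero : sInf S ∈ S := Nat.sInf_mem ⟨1, hone⟩
  rw [h] at hzero
  simpa using hzero x hx y hy hxy

theorem stmt11 (a : ℤ) (ha : 3 ≤ a) (β : ℝ) (hβ : 1 < β)
    (hroot : β ^ 3 - (a : ℝ) * β ^ 2 - ((a : ℝ) - 1) * β + 1 = 0) :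
    Lplus β = 1 := by
  have hβ0 : 0 < β := by linarith
  obtain ⟨γ, ⟨hγa, hγ1⟩, hγroot⟩ := exists_cubic_root_mem_Ioo ha
  have ha' : (3 : ℝ) ≤ a := by exact_mod_cast ha
  have hγ0 : 0 ≤ γ := le_trans (one_div_nonneg.2 (by linarith)) hγa.le
  have hconj (p : ℚ[X]) : aeval β p = 0 → aeval γ p = 0 :=
    aeval_eq_zero_of_irreducible (cubic_irreducible a) (by rwa [aeval_cubic])
      (by rwa [aeval_cubic])
  refine Lplus_eq_one (fun x hx y hy hxy => ?_)
    (exists_add_mem_finBeta_not_mem_betaInt (by omega) hβ hroot)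
  exact beta_mul_add_mem_betaInt hβ0 (lt_add_one_of_cubic_root hβ0 hroot).le
    (mul_sub_lt_of_cubic_root hβ0 hroot).le hγ0 hγ1
    (two_mul_sq_mul_lt_of_cubic_root hγa ha hγroot) hconj hx hy hxy
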